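/- Let Φ : M_n(ℂ) → M_n(ℂ) be a linear, positive, trace-preserving map, let ρ° be a state with Φ(ρ°) = ρ°, and let ε ∈ (0,1] be such that Φ(ρ) ≥ ε·ρ° (Loewner order) for every state ρ. Then for every state ρ, the iterates Φ^k(ρ) converge to ρ° as k → ∞; in particular ‖Φ^k(ρ) − ρ°‖₁ → 0. -/

import Mathlib

/-!
Doeblin's minorization splits `Φ` on states as `Φ σ = ε' ρ₀ + (1 - ε') τ` with `τ` again a
state, for any `0 < ε' ≤ ε`; taking `ε' = ε / 2 < 1` makes `τ = (1 - ε')⁻¹ (Φ σ - ε' ρ₀)`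
well defined. Since `Φ` fixes `ρ₀`, this gives `Φ σ - ρ₀ = (1 - ε') (τ - ρ₀)`, hence
`Φᵏ ρ - ρ₀ = (1 - ε')ᵏ (σₖ - ρ₀)` for states `σₖ`. The entries of a state have modulus at most
`1` (Cauchy–Schwarz for `Bᴴ B`), and `Tr |A| ≤ ∑ᵢⱼ |Aⱼᵢ|` because `|A|ᵢᵢ² ≤ (|A|²)ᵢᵢ = (Aᴴ A)ᵢᵢ`,
so `‖Φᵏ ρ - ρ₀‖₁ ≤ 2 n² (1 - ε')ᵏ → 0`.
-/

open scoped ComplexOrder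

/-- The trace norm of a matrix: `‖A‖₁ = Tr √(Aᴴ A)`.  For a Hermitian matrix this is
the sum of the absolute values of its eigenvalues. -/
noncomputable def traceNorm {n : ℕ} (A : Matrix (Fin n) (Fin n) ℂ) : ℝ :=
  ((Matrix.posSemidef_conjTranspose_mul_self A).1.eigenvectorUnitary.1 *
    Matrix.diagonal ((fun x : ℝ => (x : ℂ)) ∘ Real.sqrt ∘ (Matrix.posSemidef_conjTranspose_mul_self A).1.eigenvalues) *
    star (Matrix.posSemidef_conjTranspose_mul_self A).1.eigenvectorUnitary.1).trace.re

namespace Matrix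

variable {ι κ : Type*}

def IsState [Fintype ι] (ρ : Matrix ι ι ℂ) : Prop := ρ.PosSemidef ∧ ρ.trace = 1

lemma PosSemidef.sub_smul_of_le {A B : Matrix ι ι ℂ} {a b : ℝ}
    (hAB : (A - (a : ℂ) • B).PosSemidef) (hB : B.PosSemidef) (hba : b ≤ a) :
    (A - (b : ℂ) • B).PosSemidef := by
  have h : A - (b : ℂ) • B = (A - (a : ℂ) • B) + (a - b) • B := by
    rw [← Complex.coe_smul]; push_cast; module
  rw [h]
  exact hAB.add (hB.smul (sub_nonneg.mpr hba))

lemma re_conjTranspose_mul_self_apply_self [Fintype κ] (B : Matrix κ ι ℂ) (i : ι) :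
    ((Bᴴ * B) i i).re = ∑ k, ‖B k i‖ ^ 2 := by
  simp [mul_apply, Complex.re_sum, ← Complex.normSq_eq_norm_sq, Complex.normSq_apply]

lemma norm_conjTranspose_mul_self_apply_sq_le [Fintype κ] (B : Matrix κ ι ℂ) (i j : ι) :
    ‖(Bᴴ * B) i j‖ ^ 2 ≤ ((Bᴴ * B) i i).re * ((Bᴴ * B) j j).re := by
  have hle : ‖(Bᴴ * B) i j‖ ≤ ∑ k, ‖B k i‖ * ‖B k j‖ := by
    simpa [mul_apply] using norm_sum_le Finset.univ fun k => star (B k i) * B k j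
  rw [re_conjTranspose_mul_self_apply_self, re_conjTranspose_mul_self_apply_self]
  exact (pow_le_pow_left₀ (norm_nonneg _) hle 2).trans (Finset.sum_mul_sq_le_sq_mul_sq _ _ _)

lemma PosSemidef.re_apply_nonneg {A : Matrix ι ι ℂ} (hA : A.PosSemidef) (i : ι) :
    0 ≤ (A i i).re :=
  (Complex.nonneg_iff.mp hA.diag_nonneg).1

variable [Fintype ι]

lemma PosSemidef.norm_apply_sq_le {A : Matrix ι ι ℂ} (hA : A.PosSemidef) (i j : ι) :
    ‖A i j‖ ^ 2 ≤ (A i i).re * (A j j).re := by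
  classical
  open MatrixOrder in
  obtain ⟨B, rfl⟩ := CStarAlgebra.nonneg_iff_eq_star_mul_self.mp hA.nonneg
  exact norm_conjTranspose_mul_self_apply_sq_le B i j

lemma PosSemidef.re_apply_le_re_trace {A : Matrix ι ι ℂ} (hA : A.PosSemidef) (i : ι) :
    (A i i).re ≤ A.trace.re := by
  rw [trace, Complex.re_sum]
  exact Finset.single_le_sum (f := fun k => (A k k).re) (fun k _ => hA.re_apply_nonneg k)
    (Finset.mem_univ i)

lemma IsState.norm_apply_le_one {ρ : Matrix ι ι ℂ} (hρ : IsState ρ) (i j : ι) :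
    ‖ρ i j‖ ≤ 1 := by
  have hdiag (k : ι) : (ρ k k).re ≤ 1 := by simpa [hρ.2] using hρ.1.re_apply_le_re_trace k
  refine (pow_le_one_iff_of_nonneg (norm_nonneg _) two_ne_zero).mp ?_
  exact (hρ.1.norm_apply_sq_le i j).trans
    (mul_le_one₀ (hdiag i) (hρ.1.re_apply_nonneg j) (hdiag j))

end Matrix

open Matrix

section TraceNorm

variable {n : ℕ}

noncomputable def matrixAbs (A : Matrix (Fin n) (Fin n) ℂ) : Matrix (Fin n) (Fin n) ℂ :=
  (posSemidef_conjTranspose_mul_self A).1.eigenvectorUnitary.1 *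
    diagonal ((fun x : ℝ => (x : ℂ)) ∘ Real.sqrt ∘
      (posSemidef_conjTranspose_mul_self A).1.eigenvalues) *
    star (posSemidef_conjTranspose_mul_self A).1.eigenvectorUnitary.1

lemma traceNorm_eq_re_trace_matrixAbs (A : Matrix (Fin n) (Fin n) ℂ) :
    traceNorm A = (matrixAbs A).trace.re := rfl

lemma posSemidef_matrixAbs (A : Matrix (Fin n) (Fin n) ℂ) : (matrixAbs A).PosSemidef := by
  refine (PosSemidef.diagonal fun i => ?_).mul_mul_conjTranspose_same _
  exact Complex.zero_le_real.mpr (Real.sqrt_nonneg _)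

lemma matrixAbs_mul_self (A : Matrix (Fin n) (Fin n) ℂ) :
    matrixAbs A * matrixAbs A = Aᴴ * A := by
  have hAA := posSemidef_conjTranspose_mul_self A
  have hsq : diagonal ((fun x : ℝ => (x : ℂ)) ∘ Real.sqrt ∘ hAA.1.eigenvalues) *
      diagonal ((fun x : ℝ => (x : ℂ)) ∘ Real.sqrt ∘ hAA.1.eigenvalues) =
      diagonal (RCLike.ofReal ∘ hAA.1.eigenvalues) := by
    rw [diagonal_mul_diagonal]
    congr 1
    funext i
    simp [← Complex.ofReal_mul, Real.mul_self_sqrt (hAA.eigenvalues_nonneg i)]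
  conv_rhs => rw [hAA.1.spectral_theorem, ← hsq, map_mul]
  rfl

lemma traceNorm_nonneg (A : Matrix (Fin n) (Fin n) ℂ) : 0 ≤ traceNorm A :=
  (Complex.nonneg_iff.mp (posSemidef_matrixAbs A).trace_nonneg).1

lemma re_matrixAbs_apply_le (A : Matrix (Fin n) (Fin n) ℂ) (i : Fin n) :
    (matrixAbs A i i).re ≤ ∑ k, ‖A k i‖ := by
  set S := matrixAbs A
  have hsq : ‖S i i‖ ^ 2 ≤ (∑ k, ‖A k i‖) ^ 2 :=
    calc ‖S i i‖ ^ 2 ≤ ∑ k, ‖S k i‖ ^ 2 :=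
          Finset.single_le_sum (f := fun k => ‖S k i‖ ^ 2) (fun k _ => by positivity)
            (Finset.mem_univ i)
      _ = ((Sᴴ * S) i i).re := (re_conjTranspose_mul_self_apply_self S i).symm
      _ = ∑ k, ‖A k i‖ ^ 2 := by
          rw [(posSemidef_matrixAbs A).1.eq, matrixAbs_mul_self,
            re_conjTranspose_mul_self_apply_self]
      _ ≤ (∑ k, ‖A k i‖) ^ 2 := Finset.sum_sq_le_sq_sum_of_nonneg fun k _ => norm_nonneg _
  calc (S i i).re ≤ ‖S i i‖ := Complex.re_le_norm _
    _ ≤ ∑ k, ‖A k i‖ :=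
        (pow_le_pow_iff_left₀ (norm_nonneg _) (by positivity) two_ne_zero).mp hsq

lemma traceNorm_le_of_norm_apply_le {A : Matrix (Fin n) (Fin n) ℂ} {c : ℝ}
    (hA : ∀ i j, ‖A i j‖ ≤ c) : traceNorm A ≤ n ^ 2 * c :=
  calc traceNorm A = ∑ i, (matrixAbs A i i).re := by
        rw [traceNorm_eq_re_trace_matrixAbs, trace, Complex.re_sum]
        rfl
    _ ≤ ∑ i : Fin n, ∑ k : Fin n, c :=
        Finset.sum_le_sum fun i _ => (re_matrixAbs_apply_le A i).trans
          (Finset.sum_le_sum fun k _ => hA k i)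
    _ = n ^ 2 * c := by simp [sq, mul_assoc]

lemma traceNorm_smul_sub_le {σ τ : Matrix (Fin n) (Fin n) ℂ} (hσ : IsState σ) (hτ : IsState τ)
    {c : ℝ} (hc : 0 ≤ c) : traceNorm (c • (σ - τ)) ≤ n ^ 2 * (c * 2) :=
  traceNorm_le_of_norm_apply_le fun i j =>
    calc ‖(c • (σ - τ)) i j‖ = c * ‖σ i j - τ i j‖ := by
          simp [abs_of_nonneg hc]
      _ ≤ c * (1 + 1) := by
          gcongr
          exact norm_sub_le_of_le (hσ.norm_apply_le_one i j) (hτ.norm_apply_le_one i j)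
      _ = c * 2 := by norm_num

end TraceNorm

section Doeblin

variable {ι : Type*} [Fintype ι] {Φ : Module.End ℂ (Matrix ι ι ℂ)} {ρ₀ : Matrix ι ι ℂ} {ε : ℝ}

lemma exists_isState_map_sub_eq_smul (htr : ∀ A, (Φ A).trace = A.trace)
    (hρ₀tr : ρ₀.trace = 1) (hε1 : ε < 1)
    (hmin : ∀ ρ, IsState ρ → (Φ ρ - (ε : ℂ) • ρ₀).PosSemidef)
    {σ : Matrix ι ι ℂ} (hσ : IsState σ) :
    ∃ τ, IsState τ ∧ Φ σ - ρ₀ = (1 - ε) • (τ - ρ₀) := by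
  have hq : 1 - ε ≠ 0 := by linarith
  refine ⟨(1 - ε)⁻¹ • (Φ σ - (ε : ℂ) • ρ₀),
    ⟨(hmin σ hσ).smul (by simpa using hε1.le), ?_⟩, ?_⟩
  · rw [trace_smul, trace_sub, trace_smul, htr, hσ.2, hρ₀tr, smul_eq_mul, mul_one,
      ← Complex.ofReal_one, ← Complex.ofReal_sub, ← Complex.coe_smul, smul_eq_mul,
      ← Complex.ofReal_mul, inv_mul_cancel₀ hq, Complex.ofReal_one]
  · rw [smul_sub, smul_smul, mul_inv_cancel₀ hq, one_smul, ← Complex.coe_smul]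
    push_cast
    module

lemma exists_isState_pow_apply_sub_eq_smul (htr : ∀ A, (Φ A).trace = A.trace)
    (hρ₀tr : ρ₀.trace = 1) (hfix : Φ ρ₀ = ρ₀) (hε1 : ε < 1)
    (hmin : ∀ ρ, IsState ρ → (Φ ρ - (ε : ℂ) • ρ₀).PosSemidef)
    {ρ : Matrix ι ι ℂ} (hρ : IsState ρ) (k : ℕ) :
    ∃ σ, IsState σ ∧ (Φ ^ k) ρ - ρ₀ = (1 - ε) ^ k • (σ - ρ₀) := by
  induction k with
  | zero => exact ⟨ρ, hρ, by simp⟩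
  | succ k ih =>
    obtain ⟨σ, hσ, hk⟩ := ih
    obtain ⟨τ, hτ, hστ⟩ := exists_isState_map_sub_eq_smul htr hρ₀tr hε1 hmin hσ
    refine ⟨τ, hτ, ?_⟩
    calc (Φ ^ (k + 1)) ρ - ρ₀ = Φ ((Φ ^ k) ρ - ρ₀) := by
          rw [map_sub, hfix, pow_succ', Module.End.mul_apply]
      _ = (1 - ε) ^ k • (Φ σ - ρ₀) := by
          rw [hk, LinearMap.map_smul_of_tower, map_sub, hfix]
      _ = (1 - ε) ^ (k + 1) • (τ - ρ₀) := by rw [hστ, smul_smul, pow_succ]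

end Doeblin

theorem doeblin_iterates_tendsto_stationary_general {n : ℕ}
    (Φ : Module.End ℂ (Matrix (Fin n) (Fin n) ℂ))
    (htr : ∀ A : Matrix (Fin n) (Fin n) ℂ, (Φ A).trace = A.trace)
    (ρ₀ : Matrix (Fin n) (Fin n) ℂ) (hρ₀ : ρ₀.PosSemidef) (hρ₀tr : ρ₀.trace = 1)
    (hfix : Φ ρ₀ = ρ₀)
    (ε : ℝ) (hε0 : 0 < ε) (hε1 : ε ≤ 1)
    (hDoeblin : ∀ ρ : Matrix (Fin n) (Fin n) ℂ, ρ.PosSemidef → ρ.trace = 1 →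
      (Φ ρ - (ε : ℂ) • ρ₀).PosSemidef)
    (ρ : Matrix (Fin n) (Fin n) ℂ) (hρ : ρ.PosSemidef) (hρtr : ρ.trace = 1) :
    Filter.Tendsto (fun k : ℕ => traceNorm ((Φ ^ k) ρ - ρ₀)) Filter.atTop (nhds 0) := by
  have hq0 : 0 ≤ 1 - ε / 2 := by linarith
  have hq1 : 1 - ε / 2 < 1 := by linarith
  have hmin (σ : Matrix (Fin n) (Fin n) ℂ) (hσ : IsState σ) :
      (Φ σ - ((ε / 2 : ℝ) : ℂ) • ρ₀).PosSemidef :=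
    (hDoeblin σ hσ.1 hσ.2).sub_smul_of_le hρ₀ (by linarith)
  have hbound (k : ℕ) :
      traceNorm ((Φ ^ k) ρ - ρ₀) ≤ n ^ 2 * ((1 - ε / 2) ^ k * 2) := by
    obtain ⟨σ, hσ, hk⟩ := exists_isState_pow_apply_sub_eq_smul htr hρ₀tr hfix (by linarith)
      hmin ⟨hρ, hρtr⟩ k
    rw [hk]
    exact traceNorm_smul_sub_le hσ ⟨hρ₀, hρ₀tr⟩ (pow_nonneg hq0 k)
  have hlim : Filter.Tendsto (fun k : ℕ => (n : ℝ) ^ 2 * ((1 - ε / 2) ^ k * 2))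
      Filter.atTop (nhds 0) := by
    simpa using ((tendsto_pow_atTop_nhds_zero_of_lt_one hq0 hq1).mul_const 2).const_mul _
  exact squeeze_zero (fun k => traceNorm_nonneg _) hbound hlim

/-- Primitivity from Doeblin-type minorization: the iterates of every state converge in
trace norm to the stationary state. -/
theorem doeblin_iterates_tendsto_stationary {n : ℕ}
    (Φ : Module.End ℂ (Matrix (Fin n) (Fin n) ℂ))
    (hpos : ∀ A : Matrix (Fin n) (Fin n) ℂ, A.PosSemidef → (Φ A).PosSemidef)
    (htr : ∀ A : Matrix (Fin n) (Fin n) ℂ, (Φ A).trace = A.trace)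
    (ρ₀ : Matrix (Fin n) (Fin n) ℂ) (hρ₀ : ρ₀.PosSemidef) (hρ₀tr : ρ₀.trace = 1)
    (hfix : Φ ρ₀ = ρ₀)
    (ε : ℝ) (hε0 : 0 < ε) (hε1 : ε ≤ 1)
    (hDoeblin : ∀ ρ : Matrix (Fin n) (Fin n) ℂ, ρ.PosSemidef → ρ.trace = 1 →
      (Φ ρ - (ε : ℂ) • ρ₀).PosSemidef)
    (ρ : Matrix (Fin n) (Fin n) ℂ) (hρ : ρ.PosSemidef) (hρtr : ρ.trace = 1) :
    Filter.Tendsto (fun k : ℕ => traceNorm ((Φ ^ k) ρ - ρ₀)) Filter.atTop (nhds 0) :=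
  doeblin_iterates_tendsto_stationary_general Φ htr ρ₀ hρ₀ hρ₀tr hfix ε hε0 hε1 hDoeblin ρ hρ hρtr
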